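/- Suppose functions φ_j ∈ L₂ (j ∈ ℕ) satisfy the refinement equation with masks â_{j+1} ∈ S(2^{j+1}), and for each j ∈ ℤ₊ the functions ψ^m_j ∈ L₂ (m = 1,…,ρ_j, ρ_j positive integers) are defined by the wavelet equation with masks b̂^m_{j+1} ∈ S(2^{j+1}). If Ψ = {S^k_j ψ^m_j : j ∈ ℤ₊, m = 1,…,ρ_j, k ∈ R_j} forms a Parseval wavelet frame in L₂, then for every n ∈ ℤ there exists j ∈ ℕ such that φ̂_j(n) ≠ 0 and Σ_{m=1}^{ρ_{j−1}} |b̂^m_j(n)|² ≠ 0. -/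

import Mathlib

/-! Test the frame identity on the exponential `e_n`. Translation multiplies Fourier coefficients
by unimodular factors, so `|⟨e_n, S^k_j ψ^m_j⟩| = |ψ̂^m_j(n)|`, and `‖e_n‖ = 1` forces
`ψ̂^m_j(n) ≠ 0` for some `j, m`. By the wavelet equation this coefficient is
`√2 b̂^m_{j+1}(n) φ̂_{j+1}(n)`, so level `j + 1` has both required properties. -/

open MeasureTheory Complex Finset Filter ComplexConjugate

noncomputable section

instance : Fact ((0:ℝ) < 1) := ⟨one_pos⟩

/-- The space `L₂` of 1-periodic square-integrable complex functions, realized as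
`Lp ℂ 2` over the additive circle of length 1 with normalized Haar measure. -/
abbrev PL2 : Type := Lp ℂ 2 (@AddCircle.haarAddCircle (1 : ℝ) _)

/-- Fourier coefficient `f̂(n) = ∫₀¹ f(x) e^{-2πinx} dx`. -/
def fCoeff (f : PL2) (n : ℤ) : ℂ := fourierCoeff (f : AddCircle (1 : ℝ) → ℂ) n

/-- Inner product `⟨f, S^k_j g⟩ = ∫₀¹ f(x) conj(g(x + 2^{-j} k)) dx`. -/
def shiftInner (f g : PL2) (j : ℕ) (k : ℤ) : ℂ :=
  ∫ x : AddCircle (1 : ℝ),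
    f x * conj (g (x + (((2:ℝ)^(-(j:ℤ)) * (k:ℝ) : ℝ) : AddCircle (1 : ℝ))))
    ∂AddCircle.haarAddCircle

/-- `R_j = {-2^{j-1}+1, …, 2^{j-1}}` for `j ≥ 1` and `R₀ = {0}`. -/
def Rset (j : ℕ) : Finset ℤ :=
  if j = 0 then {0} else Finset.Icc (-(2^(j-1) : ℤ) + 1) (2^(j-1))

/-- The system `{S^k_j ψ^m_j : j ∈ ℤ₊, 1 ≤ m ≤ ρ_j, k ∈ R_j}` is a Parseval wavelet frame. -/
def IsParsevalFrame (ρ : ℕ → ℕ) (ψ : ℕ → ℕ → PL2) : Prop :=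
  ∀ f : PL2, ‖f‖^2 =
    ∑' j : ℕ, ∑ m ∈ Finset.Icc 1 (ρ j), ∑ k ∈ Rset j,
      (‖shiftInner f (ψ j m) j k‖)^2

theorem fourierCoeff_comp_add_right {T : ℝ} [Fact (0 < T)] {E : Type*} [NormedAddCommGroup E]
    [NormedSpace ℂ E] (f : AddCircle T → E) (c : AddCircle T) (n : ℤ) :
    fourierCoeff (fun x => f (x + c)) n = fourier n c • fourierCoeff f n := by
  have hshift : ∀ x, fourier (-n) x • f (x + c) =
      fourier n c • (fourier (-n) (x + c) • f (x + c)) := fun x => by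
    rw [smul_smul]
    congr 1
    simp only [fourier_apply, ← Circle.coe_mul, ← AddCircle.toCircle_add]
    congr 2
    rw [neg_zsmul, neg_zsmul, zsmul_add]
    abel
  simp only [fourierCoeff, hshift, integral_smul]
  rw [integral_add_right_eq_self (fun y => fourier (-n) y • f y) c]

theorem norm_shiftInner_fourierLp (g : PL2) (n : ℤ) (j : ℕ) (k : ℤ) :
    ‖shiftInner (fourierLp 2 n) g j k‖ = ‖fCoeff g n‖ := by
  set c : AddCircle (1 : ℝ) := (((2:ℝ)^(-(j:ℤ)) * (k:ℝ) : ℝ) : AddCircle (1 : ℝ))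
  have hconj : shiftInner (fourierLp 2 n) g j k =
      conj (fourierCoeff (fun x => (g : AddCircle (1 : ℝ) → ℂ) (x + c)) n) := by
    rw [fourierCoeff, ← integral_conj]
    refine integral_congr_ae ?_
    filter_upwards [coeFn_fourierLp (T := 1) 2 n] with x hx
    rw [hx, smul_eq_mul, map_mul, fourier_neg, conj_conj]
  rw [hconj, RCLike.norm_conj, fourierCoeff_comp_add_right, norm_smul, fourier_apply,
    Circle.norm_coe, one_mul, fCoeff]

theorem IsParsevalFrame.exists_fCoeff_ne_zero {ρ : ℕ → ℕ} {ψ : ℕ → ℕ → PL2}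
    (hframe : IsParsevalFrame ρ ψ) (n : ℤ) :
    ∃ j, ∃ m ∈ Finset.Icc 1 (ρ j), fCoeff (ψ j m) n ≠ 0 := by
  by_contra! hzero
  have hlevel : ∀ j, ∑ m ∈ Finset.Icc 1 (ρ j), ∑ _k ∈ Rset j, ‖fCoeff (ψ j m) n‖ ^ 2 = 0 :=
    fun j => Finset.sum_eq_zero fun m hm => by simp [hzero j m hm]
  have h := hframe (fourierLp 2 n)
  simp only [norm_shiftInner_fourierLp, orthonormal_fourier.1 n, hlevel, tsum_zero] at h
  norm_num at h

theorem frame_implies_nonvanishing_level_general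
    (ρ : ℕ → ℕ)
    (φ : ℕ → PL2) (ψ : ℕ → ℕ → PL2)
    (b : ℕ → ℕ → ℤ → ℂ)
    (hwav : ∀ j : ℕ, ∀ m, 1 ≤ m → m ≤ ρ j → ∀ n : ℤ,
        fCoeff (ψ j m) n = (Real.sqrt 2 : ℂ) * b (j+1) m n * fCoeff (φ (j+1)) n)
    (hframe : IsParsevalFrame ρ ψ) :
    ∀ n : ℤ, ∃ j : ℕ, 1 ≤ j ∧ fCoeff (φ j) n ≠ 0 ∧
      (∑ m ∈ Finset.Icc 1 (ρ (j-1)), (‖b j m n‖)^2) ≠ 0 := by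
  intro n
  obtain ⟨j, m, hm, hψ⟩ := hframe.exists_fCoeff_ne_zero n
  obtain ⟨hm1, hmρ⟩ := Finset.mem_Icc.mp hm
  rw [hwav j m hm1 hmρ n] at hψ
  have hb : b (j+1) m n ≠ 0 := right_ne_zero_of_mul (left_ne_zero_of_mul hψ)
  refine ⟨j+1, Nat.le_add_left 1 j, right_ne_zero_of_mul hψ, ?_⟩
  rw [Nat.add_sub_cancel]
  exact (Finset.sum_pos' (fun _ _ => by positivity) ⟨m, hm, by positivity⟩).ne'

theorem frame_implies_nonvanishing_level
    (ρ : ℕ → ℕ) (hρ : ∀ j, 0 < ρ j)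
    (φ : ℕ → PL2) (ψ : ℕ → ℕ → PL2)
    (a : ℕ → ℤ → ℂ) (b : ℕ → ℕ → ℤ → ℂ)
    (ha_per : ∀ j : ℕ, 1 ≤ j → ∀ n : ℤ, a (j+1) (n + 2^(j+1)) = a (j+1) n)
    (hb_per : ∀ j : ℕ, ∀ m, 1 ≤ m → m ≤ ρ j → ∀ n : ℤ,
        b (j+1) m (n + 2^(j+1)) = b (j+1) m n)
    (href : ∀ j : ℕ, 1 ≤ j → ∀ n : ℤ,
        fCoeff (φ j) n = (Real.sqrt 2 : ℂ) * a (j+1) n * fCoeff (φ (j+1)) n)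
    (hwav : ∀ j : ℕ, ∀ m, 1 ≤ m → m ≤ ρ j → ∀ n : ℤ,
        fCoeff (ψ j m) n = (Real.sqrt 2 : ℂ) * b (j+1) m n * fCoeff (φ (j+1)) n)
    (hframe : IsParsevalFrame ρ ψ) :
    ∀ n : ℤ, ∃ j : ℕ, 1 ≤ j ∧ fCoeff (φ j) n ≠ 0 ∧
      (∑ m ∈ Finset.Icc 1 (ρ (j-1)), (‖b j m n‖)^2) ≠ 0 :=
  frame_implies_nonvanishing_level_general ρ φ ψ b hwav hframe

end
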